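/- (Proposition 4) Let m ≥ 2 and let λ₀ ∈ ℂ be an eigenvalue of L₀ of multiplicity m, i.e. F(λ₀) = 2, F^{(j)}(λ₀) = 0 for 1 ≤ j ≤ m−1, F^{(m)}(λ₀) ≠ 0, and suppose its geometric multiplicity is 1 with φ(1,λ₀) ≠ 0 (the case θ'(1,λ₀) ≠ 0 being symmetric, using G in place of Φ). Let λ_n : (−δ₀,δ₀) → ℂ be continuous with λ_n(0) = λ₀ and F(λ_n(t)) = 2cos t. Then |α_n(t)| ∼ |t|^{2(m−1)/m} as t → 0; since 2(m−1)/m ≥ 1, the function 1/|α_n| is not Lebesgue integrable on any punctured neighborhood of 0, i.e. λ₀ is an essential spectral singularity of L. The same holds with L₀ replaced by L_π (F(λ₀) = −2 and branches through t₀ = π). -/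

import Mathlib

open MeasureTheory Set
open scoped Real Classical

noncomputable section

/-- `y` (with first derivative `yd`) solves the Hill equation `-y'' + q y = λ y` on `[0,1]`
in the Carathéodory sense: `y` and `y'` are absolutely continuous and the equation holds
almost everywhere, expressed via the equivalent integral equations. -/
structure IsHillSolution (q : ℝ → ℂ) (lam : ℂ) (y yd : ℝ → ℂ) : Prop where
  int_yd : IntervalIntegrable yd volume 0 1
  int_rhs : IntervalIntegrable (fun s => q s * y s - lam * y s) volume 0 1
  y_eq : ∀ x ∈ Icc (0:ℝ) 1, y x = y 0 + ∫ s in (0:ℝ)..x, yd s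
  yd_eq : ∀ x ∈ Icc (0:ℝ) 1, yd x = yd 0 + ∫ s in (0:ℝ)..x, (q s * y s - lam * y s)

/-- The standard context for the Hill operator: a `1`-periodic integrable potential `q`
together with the fundamental solutions `θ`, `φ` (with `x`-derivatives `θd`, `φd`)
of `-y'' + q y = λ y` normalized at `x = 0`, jointly continuous in `(x, λ)`,
entire in `λ` for fixed `x`, and satisfying the Wronskian identity. -/
structure HillContext where
  q : ℝ → ℂ
  int_q : IntervalIntegrable q volume 0 1
  periodic_q : ∀ x, q (x + 1) = q x
  θ : ℝ → ℂ → ℂ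
  θd : ℝ → ℂ → ℂ
  φ : ℝ → ℂ → ℂ
  φd : ℝ → ℂ → ℂ
  sol_θ : ∀ lam, IsHillSolution q lam (fun x => θ x lam) (fun x => θd x lam)
  sol_φ : ∀ lam, IsHillSolution q lam (fun x => φ x lam) (fun x => φd x lam)
  θ_init : ∀ lam, θ 0 lam = 1
  θd_init : ∀ lam, θd 0 lam = 0
  φ_init : ∀ lam, φ 0 lam = 0
  φd_init : ∀ lam, φd 0 lam = 1
  θ_cont : Continuous fun p : ℝ × ℂ => θ p.1 p.2
  θd_cont : Continuous fun p : ℝ × ℂ => θd p.1 p.2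
  φ_cont : Continuous fun p : ℝ × ℂ => φ p.1 p.2
  φd_cont : Continuous fun p : ℝ × ℂ => φd p.1 p.2
  θ_entire : ∀ x, Differentiable ℂ (θ x)
  θd_entire : ∀ x, Differentiable ℂ (θd x)
  φ_entire : ∀ x, Differentiable ℂ (φ x)
  φd_entire : ∀ x, Differentiable ℂ (φd x)
  wronskian : ∀ x lam, θ x lam * φd x lam - θd x lam * φ x lam = 1

namespace HillContext

variable (H : HillContext)

/-- The Hill discriminant `F(λ) = θ(1,λ) + φ'(1,λ)`. -/
def F (lam : ℂ) : ℂ := H.θ 1 lam + H.φd 1 lam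

/-- `Φ_t(x,λ) = φ(1,λ)θ(x,λ) + (e^{it} - θ(1,λ))φ(x,λ)`. -/
def Phi (t : ℝ) (x : ℝ) (lam : ℂ) : ℂ :=
  H.φ 1 lam * H.θ x lam + (Complex.exp (Complex.I * t) - H.θ 1 lam) * H.φ x lam

/-- `G_t(x,λ) = θ'(1,λ)φ(x,λ) + (e^{it} - φ'(1,λ))θ(x,λ)`. -/
def G (t : ℝ) (x : ℝ) (lam : ℂ) : ℂ :=
  H.θd 1 lam * H.φ x lam + (Complex.exp (Complex.I * t) - H.φd 1 lam) * H.θ x lam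

end HillContext

/-- The `L²(0,1)` norm of a function. -/
def l2norm (f : ℝ → ℂ) : ℝ := Real.sqrt (∫ x in (0:ℝ)..1, ‖f x‖ ^ 2)

namespace HillContext

variable (H : HillContext)

/-- The normalized eigenfunction `Ψ_{n,t}` along the branch `lamn`. -/
def Psi (lamn : ℝ → ℂ) (t : ℝ) (x : ℝ) : ℂ :=
  if l2norm (fun s => H.Phi t s (lamn t)) ≠ 0 then
    H.Phi t x (lamn t) / (l2norm (fun s => H.Phi t s (lamn t)) : ℂ)
  else
    H.G t x (lamn t) / (l2norm (fun s => H.G t s (lamn t)) : ℂ)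

/-- The normalized adjoint eigenfunction `Ψ*_{n,t}` along the branch `lamn`. -/
def PsiStar (lamn : ℝ → ℂ) (t : ℝ) (x : ℝ) : ℂ :=
  if l2norm (fun s => H.Phi (-t) s (lamn t)) ≠ 0 then
    (starRingEnd ℂ) (H.Phi (-t) x (lamn t)) / (l2norm (fun s => H.Phi (-t) s (lamn t)) : ℂ)
  else
    (starRingEnd ℂ) (H.G (-t) x (lamn t)) / (l2norm (fun s => H.G (-t) s (lamn t)) : ℂ)

/-- `α_n(t) = ∫₀¹ Ψ_{n,t}(x) conj(Ψ*_{n,t}(x)) dx`. -/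
def alpha (lamn : ℝ → ℂ) (t : ℝ) : ℂ :=
  ∫ x in (0:ℝ)..1, H.Psi lamn t x * (starRingEnd ℂ) (H.PsiStar lamn t x)

end HillContext

/-!
Differentiating Lagrange's identity in the spectral parameter expresses `∫ θ²`, `∫ θφ`, `∫ φ²`
through the `λ`-derivatives of the monodromy entries; with the Wronskian identity this gives
`∫₀¹ Φ_t Φ_{-t} = -φ(1,λ) F'(λ)` whenever `F(λ) = 2 cos t`. Hence
`α_n(t) = -φ(1,λ_n(t)) F'(λ_n(t)) / (‖Φ_t‖ ‖Φ_{-t}‖)`, whose prefactor has a nonzero limit at `t₀`.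
Since `λ₀` is a zero of order `m` of `F - 2 cos t₀`,
`|λ_n(t) - λ₀|^m ≍ |2 cos t - 2 cos t₀| ≍ |t - t₀|²`, while
`|F'(λ_n(t))| ≍ |λ_n(t) - λ₀|^(m-1) ≍ |t - t₀|^(2(m-1)/m)`. As this exponent is at least `1`,
`1/|α_n|` dominates a multiple of `1/|t - t₀|`, which is not integrable at `t₀`.
-/

open Filter Topology Asymptotics

section IntegrationByParts

variable {a b : ℝ} {f g : ℝ → ℂ}

theorem integral_primitive_mul_add_mul_primitive (hab : a ≤ b)
    (hf : IntervalIntegrable f volume a b) (hg : IntervalIntegrable g volume a b) :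
    (∫ x in a..b, (∫ s in a..x, f s) * g x) + ∫ x in a..b, f x * ∫ s in a..x, g s
      = (∫ x in a..b, f x) * ∫ x in a..b, g x := by
  set μ : Measure ℝ := volume.restrict (Ioc a b)
  have hfμ : Integrable f μ := (intervalIntegrable_iff_integrableOn_Ioc_of_le hab).1 hf
  have hgμ : Integrable g μ := (intervalIntegrable_iff_integrableOn_Ioc_of_le hab).1 hg
  have hP : Integrable (fun p : ℝ × ℝ => f p.1 * g p.2) (μ.prod μ) := hfμ.mul_prod hgμ
  have hD : MeasurableSet {p : ℝ × ℝ | p.1 ≤ p.2} := measurableSet_le measurable_fst measurable_snd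
  have restrict_Iic : ∀ x ∈ Ioc a b, μ.restrict (Iic x) = volume.restrict (Ioc a x) := by
    intro x hx
    rw [Measure.restrict_restrict measurableSet_Iic, Iic_inter_Ioc_of_le hx.2]
  have restrict_Iio : ∀ x ∈ Ioc a b, μ.restrict (Iio x) = volume.restrict (Ioo a x) := by
    intro x hx
    rw [Measure.restrict_restrict measurableSet_Iio]
    congr 1; ext y; simp only [mem_inter_iff, mem_Iio, mem_Ioc, mem_Ioo]; grind [hx.2]
  -- Fubini on `(a, b]²`, split along the diagonal
  have lower : ∫ p in {p : ℝ × ℝ | p.1 ≤ p.2}, f p.1 * g p.2 ∂(μ.prod μ)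
      = ∫ x in a..b, (∫ s in a..x, f s) * g x := by
    rw [← integral_indicator hD, integral_prod_symm _ (hP.indicator hD),
      intervalIntegral.integral_of_le hab]
    refine setIntegral_congr_fun measurableSet_Ioc fun x hx => ?_
    have : (fun s => {p : ℝ × ℝ | p.1 ≤ p.2}.indicator (fun p => f p.1 * g p.2) (s, x))
        = (Iic x).indicator fun s => f s * g x := by
      ext s; simp [Set.indicator_apply]
    rw [this, integral_indicator measurableSet_Iic, restrict_Iic x hx, integral_mul_const,
      intervalIntegral.integral_of_le hx.1.le]
  have upper : ∫ p in {p : ℝ × ℝ | p.1 ≤ p.2}ᶜ, f p.1 * g p.2 ∂(μ.prod μ)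
      = ∫ x in a..b, f x * ∫ s in a..x, g s := by
    rw [← integral_indicator hD.compl, integral_prod _ (hP.indicator hD.compl),
      intervalIntegral.integral_of_le hab]
    refine setIntegral_congr_fun measurableSet_Ioc fun x hx => ?_
    have : (fun s => {p : ℝ × ℝ | p.1 ≤ p.2}ᶜ.indicator (fun p => f p.1 * g p.2) (x, s))
        = (Iio x).indicator fun s => f x * g s := by
      ext s; simp [Set.indicator_apply, not_le]
    rw [this, integral_indicator measurableSet_Iio, restrict_Iio x hx, integral_const_mul,
      intervalIntegral.integral_of_le hx.1.le, integral_Ioc_eq_integral_Ioo]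
  rw [← lower, ← upper, integral_add_compl hD hP, integral_prod_mul,
    intervalIntegral.integral_of_le hab, intervalIntegral.integral_of_le hab]

theorem continuousOn_of_eq_add_primitive (hab : a ≤ b) {u : ℝ → ℂ}
    (hf : IntervalIntegrable f volume a b) (hu : ∀ x ∈ Icc a b, u x = u a + ∫ s in a..x, f s) :
    ContinuousOn u (uIcc a b) := by
  refine (continuousOn_const.add (intervalIntegral.continuousOn_primitive_interval' hf
    left_mem_uIcc)).congr fun x hx => hu x ?_
  rwa [uIcc_of_le hab] at hx

theorem integral_mul_add_mul_eq_sub_of_eq_add_primitive (hab : a ≤ b) {u v : ℝ → ℂ}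
    (hf : IntervalIntegrable f volume a b) (hg : IntervalIntegrable g volume a b)
    (hu : ∀ x ∈ Icc a b, u x = u a + ∫ s in a..x, f s)
    (hv : ∀ x ∈ Icc a b, v x = v a + ∫ s in a..x, g s) :
    ∫ x in a..b, (u x * g x + f x * v x) = u b * v b - u a * v a := by
  have hF := intervalIntegral.continuousOn_primitive_interval' hf left_mem_uIcc
  have hG := intervalIntegral.continuousOn_primitive_interval' hg left_mem_uIcc
  have i₁ := hg.const_mul (u a)
  have i₂ := hf.mul_const (v a)
  have i₃ := hg.continuousOn_mul hF
  have i₄ := hf.mul_continuousOn hG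
  calc ∫ x in a..b, (u x * g x + f x * v x)
      = ∫ x in a..b, ((u a * g x + f x * v a)
          + ((∫ s in a..x, f s) * g x + f x * ∫ s in a..x, g s)) := by
        refine intervalIntegral.integral_congr fun x hx => ?_
        rw [uIcc_of_le hab] at hx
        simp only [hu x hx, hv x hx]
        ring
    _ = (u a * ∫ x in a..b, g x) + (∫ x in a..b, f x) * v a
          + (∫ x in a..b, f x) * ∫ x in a..b, g x := by
        rw [intervalIntegral.integral_add (i₁.add i₂) (i₃.add i₄),
          intervalIntegral.integral_add i₁ i₂, intervalIntegral.integral_add i₃ i₄,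
          integral_primitive_mul_add_mul_primitive hab hf hg,
          intervalIntegral.integral_const_mul, intervalIntegral.integral_mul_const]
    _ = u b * v b - u a * v a := by
        rw [hu b (right_mem_Icc.2 hab), hv b (right_mem_Icc.2 hab)]
        ring

end IntegrationByParts

theorem eq_neg_of_sub_mul_eq_of_hasDerivAt {𝕜 : Type*} [NontriviallyNormedField 𝕜]
    {Q E : 𝕜 → 𝕜} {x e : 𝕜} (h : ∀ y, (x - y) * Q y = E y) (hQ : ContinuousAt Q x)
    (hE : HasDerivAt E e x) : e = -Q x := by
  have hslope : slope E x =ᶠ[𝓝[≠] x] fun y => -Q y := by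
    filter_upwards [self_mem_nhdsWithin] with y hy
    rw [slope_def_field, ← h, ← h x, sub_self, zero_mul, sub_zero,
      div_eq_iff (sub_ne_zero.2 hy)]
    ring
  exact tendsto_nhds_unique ((hasDerivAt_iff_tendsto_slope.1 hE).congr' hslope)
    (hQ.neg.tendsto.mono_left nhdsWithin_le_nhds)

theorem AnalyticAt.isTheta_sub_pow_of_analyticOrderAt_eq {𝕜 E : Type*}
    [NontriviallyNormedField 𝕜] [NormedAddCommGroup E] [NormedSpace 𝕜 E] {f : 𝕜 → E} {z₀ : 𝕜}
    {n : ℕ} (hf : AnalyticAt 𝕜 f z₀) (hn : analyticOrderAt f z₀ = n) :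
    f =Θ[𝓝 z₀] fun z => (z - z₀) ^ n := by
  obtain ⟨g, hg, hg₀, hfg⟩ := hf.analyticOrderAt_eq_natCast.1 hn
  have hg_const : g =Θ[𝓝 z₀] fun _ => (1 : 𝕜) :=
    ((isEquivalent_const_iff_tendsto hg₀).2 hg.continuousAt.tendsto).isTheta.trans
      (isTheta_const_const hg₀ one_ne_zero)
  have hfg' : f =ᶠ[𝓝 z₀] fun z => (z - z₀) ^ n • g z := hfg
  simpa using hfg'.trans_isTheta ((isTheta_refl (fun z => (z - z₀) ^ n) _).smul hg_const)

theorem Real.cos_sub_cos_isTheta_sq {t₀ : ℝ} (h : Real.sin t₀ = 0) :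
    (fun t => Real.cos t - Real.cos t₀) =Θ[𝓝 t₀] fun t => (t - t₀) ^ 2 := by
  have hcos : -2 * Real.cos t₀ ≠ 0 := by
    have := Real.sin_sq_add_cos_sq t₀
    intro hc
    simp_all
  have half_angle : ∀ t, Real.cos t - Real.cos t₀
      = -2 * Real.cos t₀ * Real.sin ((t - t₀) / 2) ^ 2 := fun t => by
    have h₁ := Real.cos_add t₀ (t - t₀)
    have h₂ := Real.cos_two_mul ((t - t₀) / 2)
    rw [add_sub_cancel, h, zero_mul, sub_zero] at h₁
    rw [mul_div_cancel₀ _ two_ne_zero] at h₂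
    rw [h₁, h₂]
    linear_combination (2 * Real.cos t₀) * Real.sin_sq_add_cos_sq ((t - t₀) / 2)
  have hsin : (fun t => Real.sin ((t - t₀) / 2)) =Θ[𝓝 t₀] fun t => (t - t₀) / 2 :=
    (Real.isEquivalent_sin.comp_tendsto (((continuous_id.sub continuous_const).div_const 2).tendsto'
      t₀ 0 (by simp))).isTheta
  have hquarter : (fun t => ((t - t₀) / 2) ^ 2) = fun t => 4⁻¹ * (t - t₀) ^ 2 := by
    ext t; ring
  simp only [half_angle]
  rw [isTheta_const_mul_left hcos]
  exact (hsin.pow 2).trans (hquarter ▸ (isTheta_const_mul_left (by norm_num)).2 isTheta_rfl)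

theorem AnalyticAt.analyticOrderAt_sub_eq_of_iteratedDeriv {𝕜 E : Type*}
    [NontriviallyNormedField 𝕜] [CharZero 𝕜] [NormedAddCommGroup E] [NormedSpace 𝕜 E]
    [CompleteSpace E] {f : 𝕜 → E} {z₀ : 𝕜} {c : E} {m : ℕ} (hf : AnalyticAt 𝕜 f z₀)
    (h₀ : f z₀ = c) (hj : ∀ j : ℕ, 1 ≤ j → j ≤ m - 1 → iteratedDeriv j f z₀ = 0)
    (hm : iteratedDeriv m f z₀ ≠ 0) (hm₀ : m ≠ 0) :
    analyticOrderAt (fun z => f z - c) z₀ = m := by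
  have hshift : ∀ j, 0 < j → iteratedDeriv j (fun z => f z - c) z₀ = iteratedDeriv j f z₀ := by
    intro j hj
    simpa only [neg_add_eq_sub] using iteratedDeriv_const_add hj (-c) (f := f) (x := z₀)
  rw [analyticOrderAt_eq_nat_iff_iteratedDeriv_eq_zero (hf.fun_sub analyticAt_const)]
  refine ⟨fun k hk => ?_, by rwa [hshift m (Nat.pos_of_ne_zero hm₀)]⟩
  rcases Nat.eq_zero_or_pos k with rfl | hk₀
  · simp [h₀]
  · rw [hshift k hk₀]
    exact hj k hk₀ (by omega)

theorem Asymptotics.IsTheta.comp_tendsto {α β E F : Type*} [Norm E] [Norm F] {l : Filter α}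
    {f : α → E} {g : α → F} (h : f =Θ[l] g) {k : β → α} {l' : Filter β} (hk : Tendsto k l' l) :
    (fun x => f (k x)) =Θ[l'] fun x => g (k x) :=
  ⟨h.1.comp_tendsto hk, h.2.comp_tendsto hk⟩

theorem Asymptotics.isTheta_mul_of_tendsto {α 𝕜 : Type*} [NormedField 𝕜] {l : Filter α}
    {k : α → 𝕜} {c : 𝕜} (hc : c ≠ 0) (hk : Tendsto k l (𝓝 c)) (f : α → 𝕜) :
    (fun x => k x * f x) =Θ[l] f :=
  (((isEquivalent_const_iff_tendsto hc).2 hk).isTheta.mul (isTheta_refl f l)).trans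
    ((isTheta_const_mul_left hc).2 isTheta_rfl)

theorem Asymptotics.IsTheta.norm_pow_of_norm_pow {α E : Type*} [SeminormedAddCommGroup E]
    {l : Filter α} {u : α → E} {g : α → ℝ} {m : ℕ} (hm : m ≠ 0) (hg : 0 ≤ᶠ[l] g)
    (h : (fun x => ‖u x‖ ^ m) =Θ[l] g) (k : ℕ) :
    (fun x => ‖u x‖ ^ k) =Θ[l] fun x => g x ^ ((k : ℝ) / m) := by
  have hroot : (fun x => (‖u x‖ ^ m) ^ ((k : ℝ) / m)) = fun x => ‖u x‖ ^ k := funext fun x => by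
    rw [← Real.rpow_natCast _ m, ← Real.rpow_mul (norm_nonneg _),
      mul_div_cancel₀ _ (Nat.cast_ne_zero.2 hm), Real.rpow_natCast]
  exact hroot ▸ h.rpow (Eventually.of_forall fun x => by positivity) hg

theorem Asymptotics.IsTheta.exists_pos_bounds_nhds {E F : Type*} [SeminormedAddCommGroup E]
    [SeminormedAddCommGroup F]
    {f : ℝ → E} {g : ℝ → F} {x₀ δ₀ : ℝ} (h : f =Θ[𝓝 x₀] g) (hδ₀ : 0 < δ₀) :
    ∃ δ c₁ c₂ : ℝ, 0 < δ ∧ δ ≤ δ₀ ∧ 0 < c₁ ∧ 0 < c₂ ∧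
      ∀ x, |x - x₀| ≤ δ → c₁ * ‖g x‖ ≤ ‖f x‖ ∧ ‖f x‖ ≤ c₂ * ‖g x‖ := by
  obtain ⟨c₂, hc₂, hupper⟩ := h.1.exists_pos
  obtain ⟨c, hc, hlower⟩ := h.2.exists_pos
  obtain ⟨ε, hε, hball⟩ := Metric.eventually_nhds_iff.1 (hupper.bound.and hlower.bound)
  refine ⟨min (ε / 2) δ₀, c⁻¹, c₂, by positivity, min_le_right _ _, by positivity, hc₂,
    fun x hx => ?_⟩
  have hx' : dist x x₀ < ε := by
    rw [Real.dist_eq]; linarith [min_le_left (ε / 2) δ₀]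
  obtain ⟨hxu, hxl⟩ := hball hx'
  exact ⟨(inv_mul_le_iff₀ hc).2 hxl, hxu⟩

theorem sub_inv_isBigO_inv_abs_rpow {c p : ℝ} (hp : 1 ≤ p) :
    (fun x => (x - c)⁻¹) =O[𝓝[≠] c] fun x => (|x - c| ^ p)⁻¹ := by
  refine IsBigO.of_bound 1 ?_
  filter_upwards [self_mem_nhdsWithin, nhdsWithin_le_nhds (Metric.closedBall_mem_nhds c one_pos)]
    with x hxc hx1
  have hpos : 0 < |x - c| := abs_pos.2 (sub_ne_zero.2 hxc)
  rw [Metric.mem_closedBall, Real.dist_eq] at hx1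
  rw [one_mul, norm_inv, norm_inv, Real.norm_eq_abs, Real.norm_of_nonneg (by positivity)]
  refine inv_anti₀ (by positivity) ?_
  simpa using Real.rpow_le_rpow_of_exponent_ge hpos hx1 hp

theorem not_integrableOn_one_div_norm_of_isTheta {E : Type*} [NormedAddCommGroup E] {f : ℝ → E}
    {c p δ : ℝ} (hf : f =Θ[𝓝 c] fun x => |x - c| ^ p) (hp : 1 ≤ p) (hδ : 0 < δ) :
    ¬ IntegrableOn (fun x => 1 / ‖f x‖) (Icc (c - δ) (c + δ) \ {c}) := by
  have hO : (fun x => (x - c)⁻¹) =O[𝓝[≠] c] fun x => 1 / ‖f x‖ := by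
    simpa only [one_div] using (sub_inv_isBigO_inv_abs_rpow hp).trans
      ((isTheta_norm_left.2 hf).inv.symm.isBigO.mono nhdsWithin_le_nhds)
  intro h
  have hIcc := h.congr_set_ae (sdiff_null_ae_eq_self (measure_singleton c)).symm
  refine not_intervalIntegrable_of_sub_inv_isBigO_punctured hO (by linarith : c - δ ≠ c + δ)
    ?_ (IntegrableOn.intervalIntegrable ?_)
  · rw [uIcc_of_le (by linarith)]; constructor <;> linarith
  · rwa [uIcc_of_le (by linarith)]

namespace IsHillSolution

variable {q : ℝ → ℂ} {lam mu : ℂ} {y yd z zd : ℝ → ℂ}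

theorem continuousOn (hy : IsHillSolution q lam y yd) : ContinuousOn y (uIcc 0 1) :=
  continuousOn_of_eq_add_primitive zero_le_one hy.int_yd hy.y_eq

theorem continuousOn_deriv (hy : IsHillSolution q lam y yd) : ContinuousOn yd (uIcc 0 1) :=
  continuousOn_of_eq_add_primitive zero_le_one hy.int_rhs hy.yd_eq

/-- Lagrange's identity for two solutions of the Hill equation at different spectral
parameters. -/
theorem sub_mul_integral_mul (hy : IsHillSolution q lam y yd) (hz : IsHillSolution q mu z zd) :
    (lam - mu) * ∫ x in (0:ℝ)..1, y x * z x
      = (y 1 * zd 1 - y 0 * zd 0) - (z 1 * yd 1 - z 0 * yd 0) := by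
  have iy := (hz.int_rhs.continuousOn_mul hy.continuousOn).add
    (hy.int_yd.mul_continuousOn hz.continuousOn_deriv)
  have iz := (hy.int_rhs.continuousOn_mul hz.continuousOn).add
    (hz.int_yd.mul_continuousOn hy.continuousOn_deriv)
  rw [← integral_mul_add_mul_eq_sub_of_eq_add_primitive zero_le_one hy.int_yd hz.int_rhs
      hy.y_eq hz.yd_eq,
    ← integral_mul_add_mul_eq_sub_of_eq_add_primitive zero_le_one hz.int_yd hy.int_rhs
      hz.y_eq hy.yd_eq,
    ← intervalIntegral.integral_sub iy iz, ← intervalIntegral.integral_const_mul]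
  congr 1
  ext x
  ring

end IsHillSolution

/-- For a family `z(·, μ)` of solutions with `μ`-independent initial data, Lagrange's identity
differentiated at `μ = λ`. -/
theorem IsHillSolution.integral_mul_eq_neg_deriv_wronskian {q : ℝ → ℂ} {lam : ℂ}
    {y yd : ℝ → ℂ} {z zd : ℝ → ℂ → ℂ} (hy : IsHillSolution q lam y yd) (hyc : Continuous y)
    (hz : ∀ μ, IsHillSolution q μ (z · μ) (zd · μ)) (hzc : Continuous fun p : ℝ × ℂ => z p.1 p.2)
    (hz0 : ∀ μ, z 0 μ = z 0 lam) (hzd0 : ∀ μ, zd 0 μ = zd 0 lam)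
    (hz1 : DifferentiableAt ℂ (z 1) lam) (hzd1 : DifferentiableAt ℂ (zd 1) lam) :
    ∫ x in (0:ℝ)..1, y x * z x lam = -(y 1 * deriv (zd 1) lam - deriv (z 1) lam * yd 1) := by
  have key := eq_neg_of_sub_mul_eq_of_hasDerivAt
    (E := fun μ => (y 1 * zd 1 μ - y 0 * zd 0 lam) - (z 1 μ * yd 1 - z 0 lam * yd 0))
    (fun μ => by rw [hy.sub_mul_integral_mul (hz μ), hz0, hzd0])
    (intervalIntegral.continuous_parametric_intervalIntegral_of_continuous'
      ((hyc.comp continuous_snd).mul (hzc.comp (continuous_snd.prodMk continuous_fst)))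
      0 1).continuousAt
    (((hzd1.hasDerivAt.const_mul (y 1)).sub_const _).sub ((hz1.hasDerivAt.mul_const _).sub_const _))
  linear_combination key

theorem l2norm_pos_of_continuous {f : ℝ → ℂ} (hf : Continuous f) {x : ℝ} (hx : x ∈ Icc (0:ℝ) 1)
    (h : f x ≠ 0) : 0 < l2norm f :=
  Real.sqrt_pos.2 <| intervalIntegral.integral_pos zero_lt_one (hf.norm.pow 2).continuousOn
    (fun _ _ => by positivity) ⟨x, hx, by positivity⟩

namespace HillContext

variable (H : HillContext)

theorem continuous_θ (lam : ℂ) : Continuous fun x => H.θ x lam :=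
  H.θ_cont.comp (continuous_id.prodMk continuous_const)

theorem continuous_φ (lam : ℂ) : Continuous fun x => H.φ x lam :=
  H.φ_cont.comp (continuous_id.prodMk continuous_const)

theorem hasDerivAt_F (lam : ℂ) :
    HasDerivAt H.F (deriv (H.θ 1) lam + deriv (H.φd 1) lam) lam :=
  (H.θ_entire 1 lam).hasDerivAt.add (H.φd_entire 1 lam).hasDerivAt

theorem differentiable_F : Differentiable ℂ H.F := fun lam => (H.hasDerivAt_F lam).differentiableAt

theorem deriv_wronskian (lam : ℂ) :
    deriv (H.θ 1) lam * H.φd 1 lam + H.θ 1 lam * deriv (H.φd 1) lam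
      - (deriv (H.θd 1) lam * H.φ 1 lam + H.θd 1 lam * deriv (H.φ 1) lam) = 0 := by
  have hconst : H.θ 1 * H.φd 1 - H.θd 1 * H.φ 1 = fun _ => 1 :=
    funext (H.wronskian 1)
  have hderiv := ((H.θ_entire 1 lam).hasDerivAt.mul (H.φd_entire 1 lam).hasDerivAt).sub
    ((H.θd_entire 1 lam).hasDerivAt.mul (H.φ_entire 1 lam).hasDerivAt)
  rw [hconst] at hderiv
  exact hderiv.unique (hasDerivAt_const lam 1)

theorem integral_θ_mul_θ (lam : ℂ) :
    ∫ x in (0:ℝ)..1, H.θ x lam * H.θ x lam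
      = -(H.θ 1 lam * deriv (H.θd 1) lam - deriv (H.θ 1) lam * H.θd 1 lam) :=
  (H.sol_θ lam).integral_mul_eq_neg_deriv_wronskian (H.continuous_θ lam) H.sol_θ H.θ_cont
    (fun μ => by rw [H.θ_init, H.θ_init]) (fun μ => by rw [H.θd_init, H.θd_init])
    (H.θ_entire 1 lam) (H.θd_entire 1 lam)

theorem integral_θ_mul_φ (lam : ℂ) :
    ∫ x in (0:ℝ)..1, H.θ x lam * H.φ x lam
      = -(H.θ 1 lam * deriv (H.φd 1) lam - deriv (H.φ 1) lam * H.θd 1 lam) :=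
  (H.sol_θ lam).integral_mul_eq_neg_deriv_wronskian (H.continuous_θ lam) H.sol_φ H.φ_cont
    (fun μ => by rw [H.φ_init, H.φ_init]) (fun μ => by rw [H.φd_init, H.φd_init])
    (H.φ_entire 1 lam) (H.φd_entire 1 lam)

theorem integral_φ_mul_φ (lam : ℂ) :
    ∫ x in (0:ℝ)..1, H.φ x lam * H.φ x lam
      = -(H.φ 1 lam * deriv (H.φd 1) lam - deriv (H.φ 1) lam * H.φd 1 lam) :=
  (H.sol_φ lam).integral_mul_eq_neg_deriv_wronskian (H.continuous_φ lam) H.sol_φ H.φ_cont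
    (fun μ => by rw [H.φ_init, H.φ_init]) (fun μ => by rw [H.φd_init, H.φd_init])
    (H.φ_entire 1 lam) (H.φd_entire 1 lam)

theorem Phi_mul_Phi_neg {t : ℝ} {lam : ℂ} (hF : H.F lam = 2 * (Real.cos t : ℂ)) (x : ℝ) :
    H.Phi t x lam * H.Phi (-t) x lam
      = H.φ 1 lam ^ 2 * (H.θ x lam * H.θ x lam)
        + H.φ 1 lam * (H.φd 1 lam - H.θ 1 lam) * (H.θ x lam * H.φ x lam)
        - H.φ 1 lam * H.θd 1 lam * (H.φ x lam * H.φ x lam) := by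
  have hexp_mul : Complex.exp (Complex.I * t) * Complex.exp (Complex.I * ((-t : ℝ) : ℂ)) = 1 := by
    rw [← Complex.exp_add]; push_cast; ring_nf; exact Complex.exp_zero
  have hexp_add : Complex.exp (Complex.I * t) + Complex.exp (Complex.I * ((-t : ℝ) : ℂ))
      = H.θ 1 lam + H.φd 1 lam := by
    rw [← F, hF, Complex.ofReal_cos, Complex.cos.eq_def]
    push_cast; ring_nf
  simp only [Phi]
  linear_combination (H.φ x lam * H.φ x lam) * (hexp_mul - H.wronskian 1 lam)
    + (H.φ 1 lam * (H.θ x lam * H.φ x lam) - H.θ 1 lam * (H.φ x lam * H.φ x lam)) * hexp_add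

theorem integral_Phi_mul_Phi_neg {t : ℝ} {lam : ℂ} (hF : H.F lam = 2 * (Real.cos t : ℂ)) :
    ∫ x in (0:ℝ)..1, H.Phi t x lam * H.Phi (-t) x lam = -(H.φ 1 lam * deriv H.F lam) := by
  have iθθ := ((H.continuous_θ lam).fun_mul (H.continuous_θ lam)).intervalIntegrable
    (μ := volume) 0 1
  have iθφ := ((H.continuous_θ lam).fun_mul (H.continuous_φ lam)).intervalIntegrable
    (μ := volume) 0 1
  have iφφ := ((H.continuous_φ lam).fun_mul (H.continuous_φ lam)).intervalIntegrable
    (μ := volume) 0 1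
  rw [intervalIntegral.integral_congr fun x _ => H.Phi_mul_Phi_neg hF x,
    intervalIntegral.integral_sub ((iθθ.const_mul _).add (iθφ.const_mul _)) (iφφ.const_mul _),
    intervalIntegral.integral_add (iθθ.const_mul _) (iθφ.const_mul _),
    intervalIntegral.integral_const_mul, intervalIntegral.integral_const_mul,
    intervalIntegral.integral_const_mul, H.integral_θ_mul_θ, H.integral_θ_mul_φ,
    H.integral_φ_mul_φ, (H.hasDerivAt_F lam).deriv]
  linear_combination H.φ 1 lam * (H.θ 1 lam * H.deriv_wronskian lam
    - (deriv (H.θ 1) lam + deriv (H.φd 1) lam) * H.wronskian 1 lam)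

theorem continuous_Phi : Continuous fun p : ℝ × ℝ × ℂ => H.Phi p.1 p.2.1 p.2.2 := by
  have hθ := H.θ_cont.comp (continuous_snd : Continuous fun p : ℝ × ℝ × ℂ => p.2)
  have hφ := H.φ_cont.comp (continuous_snd : Continuous fun p : ℝ × ℝ × ℂ => p.2)
  have hθ1 := H.θ_cont.comp (continuous_const.prodMk (continuous_snd.comp continuous_snd) :
    Continuous fun p : ℝ × ℝ × ℂ => ((1 : ℝ), p.2.2))
  have hφ1 := H.φ_cont.comp (continuous_const.prodMk (continuous_snd.comp continuous_snd) :
    Continuous fun p : ℝ × ℝ × ℂ => ((1 : ℝ), p.2.2))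
  unfold Phi
  fun_prop

theorem continuous_l2norm_Phi : Continuous fun p : ℝ × ℂ => l2norm fun x => H.Phi p.1 x p.2 :=
  (intervalIntegral.continuous_parametric_intervalIntegral_of_continuous'
    ((H.continuous_Phi.comp (continuous_fst.fst.prodMk (continuous_snd.prodMk
      continuous_fst.snd))).norm.pow 2) 0 1).sqrt

theorem l2norm_Phi_pos {lam : ℂ} (h : H.φ 1 lam ≠ 0) (t : ℝ) :
    0 < l2norm fun x => H.Phi t x lam :=
  l2norm_pos_of_continuous (H.continuous_Phi.comp (continuous_const.prodMk
    (continuous_id.prodMk continuous_const))) (left_mem_Icc.2 zero_le_one)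
    (by simpa [Phi, H.θ_init, H.φ_init] using h)

theorem alpha_eq {lamn : ℝ → ℂ} {t : ℝ} (hF : H.F (lamn t) = 2 * (Real.cos t : ℂ))
    (hp : l2norm (fun x => H.Phi t x (lamn t)) ≠ 0)
    (hm : l2norm (fun x => H.Phi (-t) x (lamn t)) ≠ 0) :
    H.alpha lamn t = -(H.φ 1 (lamn t) * deriv H.F (lamn t))
      / ((l2norm (fun x => H.Phi t x (lamn t))
          * l2norm (fun x => H.Phi (-t) x (lamn t)) : ℝ) : ℂ) := by
  rw [← H.integral_Phi_mul_Phi_neg hF, ← intervalIntegral.integral_div]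
  refine intervalIntegral.integral_congr fun x _ => ?_
  simp only [Psi, PsiStar, if_pos hp, if_pos hm, map_div₀, Complex.conj_conj, Complex.conj_ofReal,
    div_mul_div_comm, Complex.ofReal_mul]

theorem isTheta_norm_sub_pow {t₀ : ℝ} (ht₀ : Real.sin t₀ = 0) {m : ℕ} {lam₀ : ℂ}
    (hord : analyticOrderAt (fun z => H.F z - 2 * (Real.cos t₀ : ℂ)) lam₀ = m)
    {lamn : ℝ → ℂ} (hlim : Tendsto lamn (𝓝 t₀) (𝓝 lam₀))
    (hFn : ∀ᶠ t in 𝓝 t₀, H.F (lamn t) = 2 * (Real.cos t : ℂ)) :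
    (fun t => ‖lamn t - lam₀‖ ^ m) =Θ[𝓝 t₀] fun t => |t - t₀| ^ 2 := by
  have hbranch : (fun t => H.F (lamn t) - 2 * (Real.cos t₀ : ℂ))
      =Θ[𝓝 t₀] fun t => Real.cos t - Real.cos t₀ := by
    refine (IsTheta.of_norm_eventuallyEq (g := fun t => 2 * ‖Real.cos t - Real.cos t₀‖) ?_).trans
      ((isTheta_const_mul_left two_ne_zero).2 (isTheta_norm_left.2 isTheta_rfl))
    filter_upwards [hFn] with t ht
    rw [ht, ← mul_sub, norm_mul, ← Complex.ofReal_sub, Complex.norm_real, Complex.norm_two]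
  have hzero :=
    ((H.differentiable_F.sub_const _).analyticAt lam₀).isTheta_sub_pow_of_analyticOrderAt_eq hord
  simpa only [norm_pow, sq_abs] using isTheta_norm_left.2 <|
    (hzero.comp_tendsto hlim).symm.trans (hbranch.trans (Real.cos_sub_cos_isTheta_sq ht₀))

theorem isTheta_deriv_F_comp {t₀ : ℝ} (ht₀ : Real.sin t₀ = 0) {m : ℕ} (hm : m ≠ 0) {lam₀ : ℂ}
    (hord : analyticOrderAt (fun z => H.F z - 2 * (Real.cos t₀ : ℂ)) lam₀ = m)
    {lamn : ℝ → ℂ} (hlim : Tendsto lamn (𝓝 t₀) (𝓝 lam₀))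
    (hFn : ∀ᶠ t in 𝓝 t₀, H.F (lamn t) = 2 * (Real.cos t : ℂ)) :
    (fun t => deriv H.F (lamn t)) =Θ[𝓝 t₀] fun t => |t - t₀| ^ (2 * ((m : ℝ) - 1) / m) := by
  have hord' : analyticOrderAt (deriv H.F) lam₀ = (m - 1 : ℕ) := by
    have := analyticOrderAt_deriv_of_pos ((H.differentiable_F.sub_const _).analyticAt lam₀)
      (n := m - 1) (by rw [hord]; norm_cast; omega)
    rwa [show deriv (fun z => H.F z - 2 * (Real.cos t₀ : ℂ)) = deriv H.F from
      funext fun z => deriv_sub_const _] at this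
  have hzero := (H.differentiable_F.analyticAt lam₀).deriv.isTheta_sub_pow_of_analyticOrderAt_eq
    hord'
  have hroot := (H.isTheta_norm_sub_pow ht₀ hord hlim hFn).norm_pow_of_norm_pow hm
    (Eventually.of_forall fun t => by positivity) (m - 1)
  have hexp : ∀ t : ℝ, (|t - t₀| ^ 2) ^ (((m - 1 : ℕ) : ℝ) / m)
      = |t - t₀| ^ (2 * ((m : ℝ) - 1) / m) := fun t => by
    rw [← Real.rpow_natCast, ← Real.rpow_mul (abs_nonneg _), Nat.cast_sub (by omega)]
    push_cast; ring_nf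
  simp only [hexp] at hroot
  exact (hzero.comp_tendsto hlim).trans (isTheta_norm_left.1 (by simpa only [norm_pow] using hroot))

theorem isTheta_alpha_deriv_F_comp {lam₀ : ℂ} (hφ : H.φ 1 lam₀ ≠ 0) {lamn : ℝ → ℂ} {t₀ : ℝ}
    (hcont : ContinuousAt lamn t₀) (hn0 : lamn t₀ = lam₀)
    (hFn : ∀ᶠ t in 𝓝 t₀, H.F (lamn t) = 2 * (Real.cos t : ℂ)) :
    H.alpha lamn =Θ[𝓝 t₀] fun t => deriv H.F (lamn t) := by
  have hNp := H.continuous_l2norm_Phi.continuousAt.comp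
    (continuousAt_id.prodMk hcont : ContinuousAt (fun t : ℝ => (t, lamn t)) t₀)
  have hNm := H.continuous_l2norm_Phi.continuousAt.comp
    (continuousAt_id.neg.prodMk hcont : ContinuousAt (fun t : ℝ => (-t, lamn t)) t₀)
  have hNp₀ := H.l2norm_Phi_pos hφ t₀
  have hNm₀ := H.l2norm_Phi_pos hφ (-t₀)
  rw [← hn0] at hNp₀ hNm₀
  -- `α_n(t) = k(t) F'(λ_n(t))` with `k(t) = -φ(1,λ_n(t)) / (‖Φ_t‖ ‖Φ_{-t}‖)` continuous and
  -- nonzero at `t₀`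
  have hk := ((H.φ_entire 1).continuous.continuousAt.comp hcont).neg.div
    (Complex.continuous_ofReal.continuousAt.comp (hNp.mul hNm))
    (Complex.ofReal_ne_zero.2 (mul_pos hNp₀ hNm₀).ne')
  have hk₀ : -H.φ 1 (lamn t₀) / ((_ * _ : ℝ) : ℂ) ≠ 0 :=
    div_ne_zero (neg_ne_zero.2 (hn0 ▸ hφ)) (Complex.ofReal_ne_zero.2 (mul_pos hNp₀ hNm₀).ne')
  refine EventuallyEq.trans_isTheta ?_ (isTheta_mul_of_tendsto hk₀ hk.tendsto _)
  filter_upwards [hFn, hNp.eventually_ne hNp₀.ne', hNm.eventually_ne hNm₀.ne'] with t hF hp hm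
  rw [H.alpha_eq hF hp hm]
  simp only [Function.comp_apply, Pi.mul_apply, Pi.neg_apply, Pi.div_apply, id_eq]
  ring

end HillContext

/-- (Proposition 4.)  Let `m ≥ 2` and let `λ₀` be an eigenvalue of `L₀` (resp. `L_π`) of
multiplicity `m` (`F(λ₀) = 2 cos t₀` with `t₀ ∈ {0,π}`, `F⁽ʲ⁾(λ₀) = 0` for `1 ≤ j ≤ m-1`,
`F⁽ᵐ⁾(λ₀) ≠ 0`) whose geometric multiplicity is `1`, with `φ(1,λ₀) ≠ 0` (the case
`θ'(1,λ₀) ≠ 0` being symmetric).  If `λ_n` is a continuous branch on `(t₀-δ₀, t₀+δ₀)`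
with `λ_n(t₀) = λ₀` and `F(λ_n(t)) = 2 cos t`, then `|α_n(t)| ∼ |t-t₀|^{2(m-1)/m}` as
`t → t₀`; since `2(m-1)/m ≥ 1`, the function `1/|α_n|` is not Lebesgue integrable on any
punctured neighborhood of `t₀`, i.e. `λ₀` is an essential spectral singularity of `L`. -/
theorem geometric_mult_one_multiple_eigenvalue_is_ESS (H : HillContext)
    (t₀ : ℝ) (ht₀ : t₀ = 0 ∨ t₀ = π) (m : ℕ) (hm : 2 ≤ m) (lam₀ : ℂ)
    (hF0 : H.F lam₀ = 2 * (Real.cos t₀ : ℂ))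
    (hFj : ∀ j : ℕ, 1 ≤ j → j ≤ m - 1 → iteratedDeriv j H.F lam₀ = 0)
    (hFm : iteratedDeriv m H.F lam₀ ≠ 0)
    (hφ : H.φ 1 lam₀ ≠ 0)
    (δ₀ : ℝ) (hδ₀ : 0 < δ₀)
    (lamn : ℝ → ℂ) (hcont : ContinuousOn lamn (Ioo (t₀ - δ₀) (t₀ + δ₀)))
    (hn0 : lamn t₀ = lam₀)
    (hFn : ∀ t ∈ Ioo (t₀ - δ₀) (t₀ + δ₀), H.F (lamn t) = 2 * (Real.cos t : ℂ)) :
    (∃ δ c₁ c₂ : ℝ, 0 < δ ∧ δ ≤ δ₀ ∧ 0 < c₁ ∧ 0 < c₂ ∧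
      ∀ t : ℝ, 0 < |t - t₀| → |t - t₀| ≤ δ →
        c₁ * |t - t₀| ^ (2 * ((m : ℝ) - 1) / (m : ℝ)) ≤ ‖H.alpha lamn t‖ ∧
        ‖H.alpha lamn t‖ ≤ c₂ * |t - t₀| ^ (2 * ((m : ℝ) - 1) / (m : ℝ))) ∧
    (∀ δ : ℝ, 0 < δ → δ ≤ δ₀ →
      ¬ IntegrableOn (fun t => 1 / ‖H.alpha lamn t‖) (Icc (t₀ - δ) (t₀ + δ) \ {t₀})) := by
  have hsin : Real.sin t₀ = 0 := by rcases ht₀ with rfl | rfl <;> simp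
  have hnhds : Ioo (t₀ - δ₀) (t₀ + δ₀) ∈ 𝓝 t₀ := Ioo_mem_nhds (by linarith) (by linarith)
  have hcont₀ := hcont.continuousAt hnhds
  have hord := (H.differentiable_F.analyticAt lam₀).analyticOrderAt_sub_eq_of_iteratedDeriv
    hF0 hFj hFm (by omega)
  have hFn₀ := eventually_of_mem hnhds hFn
  have hα := (H.isTheta_alpha_deriv_F_comp hφ hcont₀ hn0 hFn₀).trans
    (H.isTheta_deriv_F_comp hsin (by omega) hord (hn0 ▸ hcont₀.tendsto) hFn₀)
  have hp : 1 ≤ 2 * ((m : ℝ) - 1) / m := by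
    have h2 : (2 : ℝ) ≤ m := by exact_mod_cast hm
    rw [le_div_iff₀ (by positivity)]
    linarith
  refine ⟨?_, fun δ hδ _ => not_integrableOn_one_div_norm_of_isTheta hα hp hδ⟩
  obtain ⟨δ, c₁, c₂, hδ, hδδ₀, hc₁, hc₂, hbounds⟩ := hα.exists_pos_bounds_nhds hδ₀
  refine ⟨δ, c₁, c₂, hδ, hδδ₀, hc₁, hc₂, fun t _ ht => ?_⟩
  simpa only [Real.norm_of_nonneg (Real.rpow_nonneg (abs_nonneg (t - t₀)) _)] using hbounds t ht

end
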